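/- Let n ≥ 1 be an integer, set j₀ = (n−1)/2 and φ_a(z) = e^{2πi(a−j₀)z} for a ∈ ℤ. Let α, β, λ, κ ∈ ℂ with sin(πλ) ≠ 0 and sin(πκ) ≠ 0, and set q = e^{πiκ}, η = e^{πiλ}, ζ = e^{2πiαλ}, γ = e^{2πiβ}, q̂ = q − q⁻¹, η̂ = η − η⁻¹, and G_t(z,μ) = π·sin(π(z+μ))/(sin(πz)·sin(πμ)). Then for all i, j ∈ {0,…,n−1} and all (z₁,z₂) ∈ ℂ² with sin(π(z₁−z₂−2(αλ+β))) ≠ 0: G_t(z₁−z₂−2(αλ+β), λ)·φ_i(z₂+2αλ)·φ_j(z₁−2αλ) − G_t(z₁−z₂−2(αλ+β), κ)·φ_i(z₁−2β)·φ_j(z₂+2β) = ∑_{k,l=0}^{n−1} c_{ij}^{kl}·φ_k(z₁)·φ_l(z₂), where c_{ij}^{kl} = (2πi/(q̂·η̂))·ζ^{2(i−k)}·γ^{2(j−k)} times: (qη⁻¹ − q⁻¹η) if i=j=k=l; −η̂·q^{sgn(i−j)} if i=k ≠ j=l; q̂·η^{sgn(j−i)} if j=k ≠ i=l; sgn(j−i)·q̂·η̂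 if i+j=k+l and min(i,j) < k < max(i,j); and 0 otherwise (sgn(x) = ±1 according to the sign of x). (That is, the twisted trigonometric Shibukawa–Ueno operator preserves V^t_n ⊗ V^t_n with matrix coefficients equal to the twisted affinized Cremmer–Gervais R-matrix.) -/

import Mathlib

open Complex

/-- `G_t(z,μ) = π sin(π(z+μ))/(sin(πz) sin(πμ))`. -/
noncomputable def Gtrig (z μ : ℂ) : ℂ :=
  (Real.pi : ℂ) * Complex.sin ((Real.pi : ℂ) * (z + μ)) /
    (Complex.sin ((Real.pi : ℂ) * z) * Complex.sin ((Real.pi : ℂ) * μ))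

/-- The trigonometric basis function `φ_a(z) = e^{2πi(a−(n−1)/2)z}`. -/
noncomputable def phiT (n : ℕ) (a : ℤ) (z : ℂ) : ℂ :=
  Complex.exp (2 * (Real.pi : ℂ) * Complex.I * ((a : ℂ) - ((n : ℂ) - 1) / 2) * z)

/-- The entry `c_{ij}^{kl}` of the twisted affinized Cremmer–Gervais matrix,
including the prefactor `(2πi/(q̂η̂))ζ^{2(i−k)}γ^{2(j−k)}`. -/
noncomputable def cgTwCoeff {n : ℕ} (q η ζ γ : ℂ) (i j k l : Fin n) : ℂ :=
  2 * (Real.pi : ℂ) * Complex.I / ((q - q⁻¹) * (η - η⁻¹)) *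
  ζ ^ (2 * ((i : ℤ) - (k : ℤ))) * γ ^ (2 * ((j : ℤ) - (k : ℤ))) *
  (if i = j ∧ j = k ∧ k = l then q * η⁻¹ - q⁻¹ * η
   else if i = k ∧ j = l ∧ i ≠ j then
     -(η - η⁻¹) * (if (j : ℤ) < (i : ℤ) then q else q⁻¹)
   else if j = k ∧ i = l ∧ i ≠ j then
     (q - q⁻¹) * (if (i : ℤ) < (j : ℤ) then η else η⁻¹)
   else if (i : ℤ) + (j : ℤ) = (k : ℤ) + (l : ℤ) ∧
       min (i : ℤ) (j : ℤ) < (k : ℤ) ∧ (k : ℤ) < max (i : ℤ) (j : ℤ) then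
     (if (i : ℤ) < (j : ℤ) then 1 else -1) * (q - q⁻¹) * (η - η⁻¹)
   else 0)

/-!
Put `Z = z₁ - z₂ - 2(αλ + β)` and `x = e^{2πiZ}`. A product `φ_k(z₁) φ_l(z₂)` with
`k + l = i + j`, twisted by `ζ^{2(i-k)} γ^{2(j-k)}`, is one fixed factor times `x^k`, and the two
terms of the operator are the same factor times `x^j` and `x^i`. Since
`G_t(Z, μ) = π cot πZ + π cot πμ = 2πi (1/(x - 1) + m/(m - m⁻¹))` with `m = e^{πiμ}`, everything
reduces to the scalar identity
`(x^j - x^i)/(x - 1) + η x^j/η̂ - q x^i/q̂ = (q̂ η̂)⁻¹ ∑ₖ c_{ij}^{k,i+j-k} x^k`,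
a finite geometric sum: the band entries `±q̂η̂` of the Cremmer–Gervais matrix give the powers of
`x` strictly between `x^i` and `x^j`, and the diagonal and flip entries supply the endpoints.
-/

open Real Finset

lemma exp_two_pi_mul_I_mul_ne_one {z : ℂ} (hz : sin (π * z) ≠ 0) : exp (2 * π * I * z) ≠ 1 := by
  intro h
  obtain ⟨m, hm⟩ := Complex.exp_eq_one_iff.mp h
  have hzm : z = m := by
    have h2πI : (2 * π * I : ℂ) ≠ 0 := by simp [Real.pi_ne_zero, I_ne_zero]
    exact mul_left_cancel₀ h2πI (by linear_combination hm)
  exact hz (by rw [hzm, mul_comm]; exact Complex.sin_int_mul_pi m)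

lemma exp_pi_mul_I_mul_sub_inv_ne_zero {μ : ℂ} (hμ : sin (π * μ) ≠ 0) :
    exp (π * I * μ) - (exp (π * I * μ))⁻¹ ≠ 0 := by
  intro h
  apply exp_two_pi_mul_I_mul_ne_one hμ
  rw [show 2 * π * I * μ = π * I * μ + π * I * μ by ring, Complex.exp_add]
  nth_rewrite 2 [sub_eq_zero.mp h]
  exact mul_inv_cancel₀ (exp_ne_zero _)

lemma pi_mul_cot_pi_mul_eq {z : ℂ} (hz : sin (π * z) ≠ 0) :
    π * cot (π * z) = π * I * (1 + 2 / (exp (2 * π * I * z) - 1)) := by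
  rw [Complex.cot_pi_eq_exp_ratio]
  set w := exp (2 * π * I * z)
  have hw : w - 1 ≠ 0 := sub_ne_zero.mpr (exp_two_pi_mul_I_mul_ne_one hz)
  have hw' : 1 - w ≠ 0 := by rwa [← neg_sub, neg_ne_zero]
  field_simp
  linear_combination (w - 1) * (w + 1) * I_sq

lemma Gtrig_eq_cot_add_cot {z μ : ℂ} (hz : sin (π * z) ≠ 0) (hμ : sin (π * μ) ≠ 0) :
    Gtrig z μ = π * cot (π * z) + π * cot (π * μ) := by
  rw [Gtrig, mul_add, Complex.sin_add, Complex.cot_eq_cos_div_sin, Complex.cot_eq_cos_div_sin]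
  field_simp
  ring

lemma Gtrig_eq_exp {z μ : ℂ} (hz : sin (π * z) ≠ 0) (hμ : sin (π * μ) ≠ 0) :
    Gtrig z μ = 2 * π * I * (1 / (exp (2 * π * I * z) - 1) +
      exp (π * I * μ) / (exp (π * I * μ) - (exp (π * I * μ))⁻¹)) := by
  have hm := exp_pi_mul_I_mul_sub_inv_ne_zero hμ
  have hsq : exp (2 * π * I * μ) = exp (π * I * μ) ^ 2 := by
    rw [← Complex.exp_nat_mul]; ring_nf
  rw [Gtrig_eq_cot_add_cot hz hμ, pi_mul_cot_pi_mul_eq hz, pi_mul_cot_pi_mul_eq hμ, hsq]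
  set w := exp (2 * π * I * z)
  set m := exp (π * I * μ)
  have hw : w - 1 ≠ 0 := sub_ne_zero.mpr (exp_two_pi_mul_I_mul_ne_one hz)
  have hm0 : m ≠ 0 := exp_ne_zero _
  have hm2 : m ^ 2 - 1 ≠ 0 := by
    rw [show m ^ 2 - 1 = m * (m - m⁻¹) by field_simp]
    exact mul_ne_zero hm0 hm
  field_simp
  ring

section Monomials

variable (n : ℕ) (a b z₁ z₂ : ℂ) (i j : ℕ)

lemma twist_mul_phiT_mul_phiT_of_add_eq {k l : ℕ} (hkl : k + l = i + j) :
    exp (2 * π * I * a) ^ (2 * ((i : ℤ) - k)) * exp (2 * π * I * b) ^ (2 * ((j : ℤ) - k)) *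
        phiT n k z₁ * phiT n l z₂ =
      exp (2 * π * I * a) ^ (2 * (i : ℤ)) * exp (2 * π * I * b) ^ (2 * (j : ℤ)) *
        phiT n 0 z₁ * phiT n (i + j : ℕ) z₂ * exp (2 * π * I * (z₁ - z₂ - 2 * (a + b))) ^ k := by
  have hkl' : (k : ℂ) + l = i + j := by exact_mod_cast hkl
  simp only [phiT, ← Complex.exp_int_mul, ← Complex.exp_nat_mul, ← Complex.exp_add]
  congr 1
  push_cast
  linear_combination (2 * π * I * z₂) * hkl'

lemma phiT_mul_phiT_of_swap :
    phiT n i (z₂ + 2 * a) * phiT n j (z₁ - 2 * a) =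
      exp (2 * π * I * a) ^ (2 * (i : ℤ)) * exp (2 * π * I * b) ^ (2 * (j : ℤ)) *
        phiT n 0 z₁ * phiT n (i + j : ℕ) z₂ * exp (2 * π * I * (z₁ - z₂ - 2 * (a + b))) ^ j := by
  simp only [phiT, ← Complex.exp_int_mul, ← Complex.exp_nat_mul, ← Complex.exp_add]
  congr 1
  push_cast
  ring

lemma phiT_mul_phiT_of_shift :
    phiT n i (z₁ - 2 * b) * phiT n j (z₂ + 2 * b) =
      exp (2 * π * I * a) ^ (2 * (i : ℤ)) * exp (2 * π * I * b) ^ (2 * (j : ℤ)) *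
        phiT n 0 z₁ * phiT n (i + j : ℕ) z₂ * exp (2 * π * I * (z₁ - z₂ - 2 * (a + b))) ^ i := by
  simp only [phiT, ← Complex.exp_int_mul, ← Complex.exp_nat_mul, ← Complex.exp_add]
  congr 1
  push_cast
  ring

end Monomials

/-- On the diagonal `i = j = k = l` the first two summands add up to `q η⁻¹ - q⁻¹ η`. -/
def cgEntry {K : Type*} [Field K] (q η : K) (i j k l : ℕ) : K :=
  (if k = i ∧ l = j then -(η - η⁻¹) * (if j < i then q else q⁻¹) else 0) +
  (if k = j ∧ l = i then (q - q⁻¹) * (if i < j then η else η⁻¹) else 0) +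
  (if k + l = i + j ∧ min i j < k ∧ k < max i j then
    (if i < j then 1 else -1) * (q - q⁻¹) * (η - η⁻¹) else 0)

lemma cgTwCoeff_eq {n : ℕ} (q η ζ γ : ℂ) (i j k l : Fin n) :
    cgTwCoeff q η ζ γ i j k l =
      2 * π * I / ((q - q⁻¹) * (η - η⁻¹)) *
        ζ ^ (2 * ((i : ℤ) - (k : ℤ))) * γ ^ (2 * ((j : ℤ) - (k : ℤ))) * cgEntry q η i j k l := by
  rw [cgTwCoeff, cgEntry]
  congr 1
  simp only [Fin.ext_iff, Nat.cast_lt, ne_eq]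
  split_ifs <;> first | (exfalso; omega) | ring1

lemma cgEntry_eq_zero_of_add_ne {K : Type*} [Field K] (q η : K) {i j k l : ℕ}
    (h : k + l ≠ i + j) : cgEntry q η i j k l = 0 := by
  rw [cgEntry, if_neg (by omega), if_neg (by omega), if_neg (by omega)]
  ring

lemma cgTwCoeff_mul_phiT_mul_phiT {n : ℕ} (q η a b z₁ z₂ : ℂ) (i j k l : Fin n) :
    cgTwCoeff q η (exp (2 * π * I * a)) (exp (2 * π * I * b)) i j k l *
        phiT n (k : ℕ) z₁ * phiT n (l : ℕ) z₂ =
      2 * π * I / ((q - q⁻¹) * (η - η⁻¹)) *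
        (exp (2 * π * I * a) ^ (2 * (i : ℤ)) * exp (2 * π * I * b) ^ (2 * (j : ℤ)) *
          phiT n 0 z₁ * phiT n (i + j : ℕ) z₂) *
        (cgEntry q η i j k l * exp (2 * π * I * (z₁ - z₂ - 2 * (a + b))) ^ (k : ℕ)) := by
  rw [cgTwCoeff_eq]
  by_cases hkl : (k : ℕ) + l = i + j
  · linear_combination (2 * π * I / ((q - q⁻¹) * (η - η⁻¹)) * cgEntry q η i j k l) *
      twist_mul_phiT_mul_phiT_of_add_eq n a b z₁ z₂ i j hkl
  · rw [cgEntry_eq_zero_of_add_ne q η hkl]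
    ring

section DoubleSums

variable {M : Type*} [AddCommMonoid M] {n : ℕ}

lemma sum_range_sum_range_ite_and {i j : ℕ} (hi : i < n) (hj : j < n) (f : ℕ → ℕ → M) :
    ∑ k ∈ range n, ∑ l ∈ range n, (if k = i ∧ l = j then f k l else 0) = f i j := by
  simp [ite_and, Finset.sum_ite_eq', hi, hj]

lemma sum_range_sum_range_ite_add_eq_and (s : ℕ) (p : ℕ → Prop) [DecidablePred p]
    (hp : ∀ k, p k → k ≤ s ∧ s - k < n) (f : ℕ → M) :
    ∑ k ∈ range n, ∑ l ∈ range n, (if k + l = s ∧ p k then f k else 0) =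
      ∑ k ∈ (range n).filter p, f k := by
  rw [sum_filter]
  refine sum_congr rfl fun k _ => ?_
  by_cases hk : p k
  · obtain ⟨hks, hsk⟩ := hp k hk
    rw [if_pos hk, sum_eq_single_of_mem (s - k) (mem_range.mpr hsk)]
    · rw [if_pos ⟨by omega, hk⟩]
    · intro l _ hl
      rw [if_neg (by omega)]
  · simp [hk]

end DoubleSums

lemma sum_sum_cgEntry_mul_pow {K : Type*} [Field K] (q η : K) {x : K} (hx : x ≠ 1) {n : ℕ}
    (i j : Fin n) :
    ∑ k : Fin n, ∑ l : Fin n, cgEntry q η i j k l * x ^ (k : ℕ) =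
      (q - q⁻¹) * (η - η⁻¹) * ((x ^ (j : ℕ) - x ^ (i : ℕ)) / (x - 1)) +
        (q - q⁻¹) * η * x ^ (j : ℕ) - (η - η⁻¹) * q * x ^ (i : ℕ) := by
  obtain ⟨i, hi⟩ := i
  obtain ⟨j, hj⟩ := j
  have hrow : ∀ k : ℕ, ∑ l : Fin n, cgEntry q η i j k l * x ^ k =
      ∑ l ∈ range n, cgEntry q η i j k l * x ^ k :=
    fun k => Fin.sum_univ_eq_sum_range (fun l => cgEntry q η i j k l * x ^ k) n
  simp only [hrow]
  rw [Fin.sum_univ_eq_sum_range (fun k => ∑ l ∈ range n, cgEntry q η i j k l * x ^ k) n]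
  simp only [cgEntry, add_mul, ite_mul, zero_mul, sum_add_distrib]
  rw [sum_range_sum_range_ite_and hi hj, sum_range_sum_range_ite_and hj hi,
    sum_range_sum_range_ite_add_eq_and (i + j) _ (fun k hk => by omega)]
  have hIoo : (range n).filter (fun k => min i j < k ∧ k < max i j) =
      Ioo (min i j) (max i j) := by
    ext k; simp only [mem_filter, mem_range, mem_Ioo]; omega
  rw [hIoo]
  have hx1 : x - 1 ≠ 0 := sub_ne_zero.mpr hx
  rcases lt_trichotomy i j with hij | rfl | hij
  · simp only [min_eq_left hij.le, max_eq_right hij.le, if_neg hij.not_gt, if_pos hij]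
    rw [← mul_sum, ← Ico_add_one_left_eq_Ioo, geom_sum_Ico hx (Nat.add_one_le_of_lt hij)]
    field_simp
    ring
  · simp only [min_self, max_self, Ioo_self, sum_empty, lt_self_iff_false, if_false]
    ring
  · simp only [min_eq_right hij.le, max_eq_left hij.le, if_pos hij, if_neg hij.not_gt]
    rw [← mul_sum, ← Ico_add_one_left_eq_Ioo, geom_sum_Ico hx (Nat.add_one_le_of_lt hij)]
    field_simp
    ring

theorem trig_SU_on_Vt_general (n : ℕ) (α β lam κ : ℂ)
    (hlam : Complex.sin ((Real.pi : ℂ) * lam) ≠ 0)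
    (hκ : Complex.sin ((Real.pi : ℂ) * κ) ≠ 0)
    (i j : Fin n) (z₁ z₂ : ℂ)
    (hz : Complex.sin ((Real.pi : ℂ) * (z₁ - z₂ - 2 * (α * lam + β))) ≠ 0) :
    Gtrig (z₁ - z₂ - 2 * (α * lam + β)) lam *
        phiT n (i : ℤ) (z₂ + 2 * α * lam) * phiT n (j : ℤ) (z₁ - 2 * α * lam) -
      Gtrig (z₁ - z₂ - 2 * (α * lam + β)) κ *
        phiT n (i : ℤ) (z₁ - 2 * β) * phiT n (j : ℤ) (z₂ + 2 * β) =
    ∑ k : Fin n, ∑ l : Fin n,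
      cgTwCoeff (Complex.exp ((Real.pi : ℂ) * Complex.I * κ))
          (Complex.exp ((Real.pi : ℂ) * Complex.I * lam))
          (Complex.exp (2 * (Real.pi : ℂ) * Complex.I * α * lam))
          (Complex.exp (2 * (Real.pi : ℂ) * Complex.I * β)) i j k l *
        phiT n (k : ℤ) z₁ * phiT n (l : ℤ) z₂ := by
  have hx := exp_two_pi_mul_I_mul_ne_one hz
  have hq := exp_pi_mul_I_mul_sub_inv_ne_zero hκ
  have hη := exp_pi_mul_I_mul_sub_inv_ne_zero hlam
  simp only [mul_assoc 2 α lam, mul_assoc (2 * (π : ℂ) * I) α lam, cgTwCoeff_mul_phiT_mul_phiT,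
    ← mul_sum, sum_sum_cgEntry_mul_pow _ _ hx]
  rw [mul_assoc _ (phiT n _ (z₂ + _)), mul_assoc _ (phiT n _ (z₁ - 2 * β)),
    phiT_mul_phiT_of_swap n (α * lam) β, phiT_mul_phiT_of_shift n (α * lam) β,
    Gtrig_eq_exp hz hlam, Gtrig_eq_exp hz hκ]
  generalize exp (2 * π * I * (z₁ - z₂ - 2 * (α * lam + β))) = x at hx ⊢
  generalize exp (π * I * κ) - (exp (π * I * κ))⁻¹ = q' at hq ⊢
  generalize exp (π * I * lam) - (exp (π * I * lam))⁻¹ = η' at hη ⊢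
  have hx1 : x - 1 ≠ 0 := sub_ne_zero.mpr hx
  field_simp
  ring

/-- The twisted trigonometric Shibukawa–Ueno operator preserves `V^t_n ⊗ V^t_n`,
with matrix coefficients the twisted affinized Cremmer–Gervais `R`-matrix. -/
theorem trig_SU_on_Vt (n : ℕ) (hn : 1 ≤ n) (α β lam κ : ℂ)
    (hlam : Complex.sin ((Real.pi : ℂ) * lam) ≠ 0)
    (hκ : Complex.sin ((Real.pi : ℂ) * κ) ≠ 0)
    (i j : Fin n) (z₁ z₂ : ℂ)
    (hz : Complex.sin ((Real.pi : ℂ) * (z₁ - z₂ - 2 * (α * lam + β))) ≠ 0) :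
    Gtrig (z₁ - z₂ - 2 * (α * lam + β)) lam *
        phiT n (i : ℤ) (z₂ + 2 * α * lam) * phiT n (j : ℤ) (z₁ - 2 * α * lam) -
      Gtrig (z₁ - z₂ - 2 * (α * lam + β)) κ *
        phiT n (i : ℤ) (z₁ - 2 * β) * phiT n (j : ℤ) (z₂ + 2 * β) =
    ∑ k : Fin n, ∑ l : Fin n,
      cgTwCoeff (Complex.exp ((Real.pi : ℂ) * Complex.I * κ))
          (Complex.exp ((Real.pi : ℂ) * Complex.I * lam))
          (Complex.exp (2 * (Real.pi : ℂ) * Complex.I * α * lam))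
          (Complex.exp (2 * (Real.pi : ℂ) * Complex.I * β)) i j k l *
        phiT n (k : ℤ) z₁ * phiT n (l : ℤ) z₂ :=
  trig_SU_on_Vt_general n α β lam κ hlam hκ i j z₁ z₂ hz
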